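/- arXiv:1808.08083 — 2 statements merged into one kernel-verified Lean document; each statement's English description precedes it below -/
import Mathlib

section
/- Let u : ℝ^d → ℝ be continuously differentiable with compact support, and V : ℝ^d → ℝ^d continuously differentiable and bounded with bounded derivative. Then the shape derivative of J(Ω_s) = ∫_{Ω_s} u dx at s = 0, where Ω_s = P_s(Ω) and P_s = id + s•V, equals ∫_Ω (∇u ⋅ V + u · div V) dx. -/
/-!
For small `s` the map `P_s = id + s • V` is a Lipschitz perturbation of the identity with constant
`|s| * sup ‖DV‖ < 1`, hence injective, and its Jacobian `det (1 + s • DV)` stays positive, so the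
change of variables formula gives `J(Ω_s) = ∫_Ω det (1 + s • DV x) • u (P_s x) dx`. This integrand
is differentiable in `s` with a derivative bounded uniformly in `x` (by compactness of
`[-1, 1] × {A | ‖A‖ ≤ sup ‖DV‖}`), so we may differentiate under the integral sign; at `s = 0`
the derivative of `det (1 + s • A)` is `tr A`.
-/

open Filter Topology MeasureTheory Metric

open Polynomial in
theorem Matrix.hasDerivAt_det_one_add_smul_zero {n 𝕜 : Type*} [Fintype n] [DecidableEq n]
    [NontriviallyNormedField 𝕜] (A : Matrix n n 𝕜) :
    HasDerivAt (fun t : 𝕜 => (1 + t • A).det) A.trace 0 := by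
  have hpoly : (fun t : 𝕜 => (1 + t • A).det) =
      fun t => (det (1 + (X : 𝕜[X]) • A.map C)).eval t := by
    funext t
    simp [eval_det, ← smul_eq_mul_diagonal]
  rw [hpoly, ← derivative_det_one_add_X_smul]
  exact Polynomial.hasDerivAt _ 0

theorem ContDiff.matrix_det {n 𝕜 X : Type*} [Fintype n] [DecidableEq n]
    [NontriviallyNormedField 𝕜] [NormedAddCommGroup X] [NormedSpace 𝕜 X] {k : WithTop ℕ∞}
    {M : X → Matrix n n 𝕜} (hM : ∀ i j, ContDiff 𝕜 k fun x => M x i j) :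
    ContDiff 𝕜 k fun x => (M x).det := by
  simp only [Matrix.det_apply']
  exact ContDiff.sum fun σ _ => contDiff_const.mul (contDiff_prod fun i _ => hM (σ i) i)

theorem LinearMap.trace_eq_sum_apply_single {ι R : Type*} [Fintype ι] [DecidableEq ι]
    [CommRing R] (A : (ι → R) →ₗ[R] (ι → R)) :
    LinearMap.trace R _ A = ∑ i, A (Pi.single i 1) i := by
  rw [LinearMap.trace_eq_matrix_trace R (Pi.basisFun R ι)]
  simp [Matrix.trace]

theorem LinearMap.apply_eq_sum_apply_single_mul {ι R : Type*} [Fintype ι] [DecidableEq ι]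
    [CommRing R] (f : (ι → R) →ₗ[R] R) (v : ι → R) :
    f v = ∑ i, f (Pi.single i 1) * v i := by
  conv_lhs => rw [pi_eq_sum_univ' v]
  simp [mul_comm]

theorem LipschitzWith.eventually_injective_add_smul {E : Type*} [NormedAddCommGroup E]
    [NormedSpace ℝ E] {V : E → E} {K : NNReal} (hV : LipschitzWith K V) :
    ∀ᶠ s in 𝓝 (0 : ℝ), Function.Injective fun x => x + s • V x := by
  have hsmall : ∀ᶠ s in 𝓝 (0 : ℝ), ‖s‖₊ * K < 1 :=
    (continuous_nnnorm.mul continuous_const).continuousAt.eventually_lt continuousAt_const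
      (by simp)
  filter_upwards [hsmall] with s hs
  refine (AntilipschitzWith.id.add_lipschitzWith ((lipschitzWith_smul s).comp hV) ?_).injective
  simpa using hs

section FiniteDimensional

variable {E : Type*} [NormedAddCommGroup E] [NormedSpace ℝ E] [FiniteDimensional ℝ E]

namespace ContinuousLinearMap

theorem contDiff_det {k : WithTop ℕ∞} : ContDiff ℝ k (det : (E →L[ℝ] E) → ℝ) := by
  let b := Module.finBasis ℝ E
  have hdet : (det : (E →L[ℝ] E) → ℝ) =
      fun A : E →L[ℝ] E => (LinearMap.toMatrix b b (A : E →ₗ[ℝ] E)).det := by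
    funext A
    exact (LinearMap.det_toMatrix b _).symm
  rw [hdet]
  refine ContDiff.matrix_det fun i j => ?_
  simp only [LinearMap.toMatrix_apply, coe_coe]
  exact (LinearMap.toContinuousLinearMap (b.coord i)).contDiff.comp
    (contDiff_id.clm_apply contDiff_const)

theorem hasDerivAt_det_one_add_smul (A : E →L[ℝ] E) (s : ℝ) :
    HasDerivAt (fun t : ℝ => (1 + t • A).det) (fderiv ℝ det (1 + s • A) A) s := by
  have hline : HasDerivAt (fun t : ℝ => 1 + t • A) A s := by
    simpa using ((hasDerivAt_id s).smul_const A).const_add 1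
  exact (contDiff_det.differentiable one_ne_zero _).hasFDerivAt.comp_hasDerivAt s hline

theorem fderiv_det_one (A : E →L[ℝ] E) : fderiv ℝ det 1 A = LinearMap.trace ℝ E A := by
  let b := Module.finBasis ℝ E
  have htrace : HasDerivAt (fun t : ℝ => (1 + t • A).det) (LinearMap.trace ℝ E A) 0 := by
    rw [LinearMap.trace_eq_matrix_trace ℝ b]
    refine (LinearMap.toMatrix b b (A : E →ₗ[ℝ] E)).hasDerivAt_det_one_add_smul_zero
      |>.congr_of_eventuallyEq (Eventually.of_forall fun t => ?_)
    simp only [det, ← LinearMap.det_toMatrix b, toLinearMap_add, toLinearMap_smul,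
      toLinearMap_one, map_add, map_smul, LinearMap.toMatrix_one]
  simpa using (hasDerivAt_det_one_add_smul A 0).unique htrace

theorem eventually_forall_det_one_add_smul_pos (R : ℝ) :
    ∀ᶠ s in 𝓝 (0 : ℝ), ∀ A : E →L[ℝ] E, ‖A‖ ≤ R → 0 < (1 + s • A).det := by
  have hcont : Continuous fun p : ℝ × (E →L[ℝ] E) => (1 + p.1 • p.2).det :=
    continuous_det.comp (by fun_prop)
  have := (isCompact_closedBall (0 : E →L[ℝ] E) R).eventually_forall_of_forall_eventually
    (x₀ := (0 : ℝ)) (P := fun s A => 0 < (1 + s • A).det) fun A _ =>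
      continuousAt_const.eventually_lt hcont.continuousAt (by simp [det])
  simpa [mem_closedBall_zero_iff] using this

theorem exists_bound_det_one_add_smul (R : ℝ) :
    ∃ C, ∀ s ∈ closedBall (0 : ℝ) 1, ∀ A : E →L[ℝ] E, ‖A‖ ≤ R →
      ‖(1 + s • A).det‖ ≤ C ∧ ‖fderiv ℝ det (1 + s • A) A‖ ≤ C := by
  have hK : IsCompact (closedBall (0 : ℝ) 1 ×ˢ closedBall (0 : E →L[ℝ] E) R) :=
    (isCompact_closedBall _ _).prod (isCompact_closedBall _ _)
  have hline : Continuous fun p : ℝ × (E →L[ℝ] E) => 1 + p.1 • p.2 := by fun_prop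
  obtain ⟨C₀, hC₀⟩ :=
    hK.exists_bound_of_continuousOn (continuous_det.comp hline).continuousOn
  obtain ⟨C₁, hC₁⟩ := hK.exists_bound_of_continuousOn
    (((contDiff_det (E := E)).continuous_fderiv one_ne_zero).comp hline |>.clm_apply
      continuous_snd).continuousOn
  refine ⟨max C₀ C₁, fun s hs A hA => ?_⟩
  have hmem : (s, A) ∈ closedBall (0 : ℝ) 1 ×ˢ closedBall (0 : E →L[ℝ] E) R :=
    ⟨hs, mem_closedBall_zero_iff.2 hA⟩
  exact ⟨(hC₀ _ hmem).trans (le_max_left _ _), (hC₁ _ hmem).trans (le_max_right _ _)⟩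

end ContinuousLinearMap

variable {F : Type*} [NormedAddCommGroup F] [NormedSpace ℝ F]

theorem hasDerivAt_det_one_add_smul_smul_comp_add_smul {u : E → F} (hu : Differentiable ℝ u)
    (A : E →L[ℝ] E) (x v : E) (s : ℝ) :
    HasDerivAt (fun t : ℝ => (1 + t • A).det • u (x + t • v))
      ((1 + s • A).det • fderiv ℝ u (x + s • v) v
        + fderiv ℝ ContinuousLinearMap.det (1 + s • A) A • u (x + s • v)) s := by
  have hline : HasDerivAt (fun t : ℝ => x + t • v) v s := by
    simpa using ((hasDerivAt_id s).smul_const v).const_add x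
  exact (ContinuousLinearMap.hasDerivAt_det_one_add_smul A s).smul
    ((hu _).hasFDerivAt.comp_hasDerivAt s hline)

variable [MeasurableSpace E] [BorelSpace E]

theorem setIntegral_image_add_smul (μ : Measure E) [μ.IsAddHaarMeasure] {V : E → E}
    (hV : Differentiable ℝ V) {Ω : Set E} (hΩ : MeasurableSet Ω) {s : ℝ}
    (hinj : Set.InjOn (fun x => x + s • V x) Ω)
    (hpos : ∀ x ∈ Ω, 0 < (1 + s • fderiv ℝ V x).det) (u : E → F) :
    ∫ x in (fun x => x + s • V x) '' Ω, u x ∂μ =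
      ∫ x in Ω, (1 + s • fderiv ℝ V x).det • u (x + s • V x) ∂μ := by
  have hP : ∀ x ∈ Ω, HasFDerivWithinAt (fun x => x + s • V x) (1 + s • fderiv ℝ V x) Ω x :=
    fun x _ => ((hasFDerivAt_id x).add ((hV x).hasFDerivAt.const_smul s)).hasFDerivWithinAt
  rw [integral_image_eq_integral_abs_det_fderiv_smul μ hΩ hP hinj]
  exact setIntegral_congr_fun hΩ fun x hx => by rw [abs_of_pos (hpos x hx)]

theorem hasDerivAt_integral_det_smul_comp_add_smul [CompleteSpace F] (μ : Measure E)
    [IsFiniteMeasure μ] {u : E → F} (hu : ContDiff ℝ 1 u) (hu_supp : HasCompactSupport u)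
    {V : E → E} (hV : ContDiff ℝ 1 V) {CV CDV : ℝ} (hVbd : ∀ x, ‖V x‖ ≤ CV)
    (hDVbd : ∀ x, ‖fderiv ℝ V x‖ ≤ CDV) :
    HasDerivAt (fun s : ℝ => ∫ x, (1 + s • fderiv ℝ V x).det • u (x + s • V x) ∂μ)
      (∫ x, fderiv ℝ u x (V x) + LinearMap.trace ℝ E (fderiv ℝ V x) • u x ∂μ) 0 := by
  set F' : ℝ → E → F := fun s x =>
    (1 + s • fderiv ℝ V x).det • fderiv ℝ u (x + s • V x) (V x)
      + fderiv ℝ ContinuousLinearMap.det (1 + s • fderiv ℝ V x) (fderiv ℝ V x) • u (x + s • V x)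
  have hDu := hu.continuous_fderiv one_ne_zero
  have hDV := hV.continuous_fderiv one_ne_zero
  have hVc := hV.continuous
  have hcont : ∀ s : ℝ, Continuous fun x => (1 + s • fderiv ℝ V x).det • u (x + s • V x) :=
    fun s => (ContinuousLinearMap.continuous_det.comp (by fun_prop)).smul
      (hu.continuous.comp (by fun_prop))
  have hcont' : Continuous (F' 0) :=
    ((ContinuousLinearMap.continuous_det.comp (by fun_prop)).smul
      ((hDu.comp (by fun_prop)).clm_apply hVc)).add
    (((ContinuousLinearMap.contDiff_det.continuous_fderiv one_ne_zero).comp (by fun_prop)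
      |>.clm_apply hDV).smul (hu.continuous.comp (by fun_prop)))
  obtain ⟨CJ, hCJ⟩ := ContinuousLinearMap.exists_bound_det_one_add_smul (E := E) CDV
  obtain ⟨Cu, hCu⟩ := hu_supp.exists_bound_of_continuous hu.continuous
  obtain ⟨Cu', hCu'⟩ := (hu_supp.fderiv ℝ).exists_bound_of_continuous hDu
  have hbound : ∀ x, ∀ s ∈ closedBall (0 : ℝ) 1, ‖F' s x‖ ≤ CJ * (Cu' * CV) + CJ * Cu := by
    intro x s hs
    obtain ⟨hJ, hJ'⟩ := hCJ s hs _ (hDVbd x)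
    have hCJ_nonneg : 0 ≤ CJ := (norm_nonneg _).trans hJ
    have hDuV : ‖fderiv ℝ u (x + s • V x) (V x)‖ ≤ Cu' * CV :=
      ((fderiv ℝ u _).le_opNorm _).trans
        (mul_le_mul (hCu' _) (hVbd x) (norm_nonneg _) ((norm_nonneg _).trans (hCu' x)))
    exact (norm_add_le _ _).trans (add_le_add
      ((norm_smul_le _ _).trans (mul_le_mul hJ hDuV (norm_nonneg _) hCJ_nonneg))
      ((norm_smul_le _ _).trans (mul_le_mul hJ' (hCu _) (norm_nonneg _) hCJ_nonneg)))
  have hint :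
      Integrable (fun x => (1 + (0 : ℝ) • fderiv ℝ V x).det • u (x + (0 : ℝ) • V x)) μ := by
    simpa [ContinuousLinearMap.det] using hu.continuous.integrable_of_hasCompactSupport hu_supp
  have key := hasDerivAt_integral_of_dominated_loc_of_deriv_le (μ := μ) (x₀ := 0) (F' := F')
    (closedBall_mem_nhds 0 one_pos) (.of_forall fun s => (hcont s).aestronglyMeasurable)
    hint hcont'.aestronglyMeasurable (ae_of_all _ hbound) (integrable_const _)
    (ae_of_all _ fun x s _ => hasDerivAt_det_one_add_smul_smul_comp_add_smul
      (hu.differentiable one_ne_zero) _ x (V x) s)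
  refine key.2.congr_deriv (integral_congr_ae (ae_of_all _ fun x => ?_))
  simp [F', ContinuousLinearMap.fderiv_det_one, ContinuousLinearMap.det]

theorem hasDerivAt_setIntegral_image_add_smul [CompleteSpace F] (μ : Measure E)
    [μ.IsAddHaarMeasure] {u : E → F} (hu : ContDiff ℝ 1 u) (hu_supp : HasCompactSupport u)
    {V : E → E} (hV : ContDiff ℝ 1 V) {CV CDV : ℝ} (hVbd : ∀ x, ‖V x‖ ≤ CV)
    (hDVbd : ∀ x, ‖fderiv ℝ V x‖ ≤ CDV) {Ω : Set E} (hΩ : MeasurableSet Ω) (hΩμ : μ Ω ≠ ⊤) :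
    HasDerivAt (fun s : ℝ => ∫ x in (fun x => x + s • V x) '' Ω, u x ∂μ)
      (∫ x in Ω, fderiv ℝ u x (V x) + LinearMap.trace ℝ E (fderiv ℝ V x) • u x ∂μ) 0 := by
  have : IsFiniteMeasure (μ.restrict Ω) := isFiniteMeasure_restrict.2 hΩμ
  have hVlip : LipschitzWith CDV.toNNReal V :=
    lipschitzWith_of_nnnorm_fderiv_le (hV.differentiable one_ne_zero) fun x => by
      simpa [← NNReal.coe_le_coe] using (hDVbd x).trans (le_max_left _ 0)
  have hchange : ∀ᶠ s in 𝓝 (0 : ℝ), ∫ x in (fun x => x + s • V x) '' Ω, u x ∂μ =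
      ∫ x in Ω, (1 + s • fderiv ℝ V x).det • u (x + s • V x) ∂μ := by
    filter_upwards [hVlip.eventually_injective_add_smul,
      ContinuousLinearMap.eventually_forall_det_one_add_smul_pos (E := E) CDV] with s hinj hpos
    exact setIntegral_image_add_smul μ (hV.differentiable one_ne_zero) hΩ hinj.injOn
      (fun x _ => hpos _ (hDVbd x)) u
  exact (hasDerivAt_integral_det_smul_comp_add_smul _ hu hu_supp hV hVbd hDVbd)
    |>.congr_of_eventuallyEq hchange

end FiniteDimensional

theorem shape_derivative_volume_integral
    (d : ℕ) (u : (Fin d → ℝ) → ℝ) (hu : ContDiff ℝ 1 u)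
    (hu_supp : HasCompactSupport u)
    (V : (Fin d → ℝ) → (Fin d → ℝ)) (hV : ContDiff ℝ 1 V)
    (CV : ℝ) (hVbd : ∀ x, ‖V x‖ ≤ CV) (CDV : ℝ) (hDVbd : ∀ x, ‖fderiv ℝ V x‖ ≤ CDV)
    (Ω : Set (Fin d → ℝ)) (hΩo : IsOpen Ω) (hΩb : Bornology.IsBounded Ω) :
    HasDerivAt (fun s : ℝ => ∫ x in (fun x => x + s • V x) '' Ω, u x)
      (∫ x in Ω,
        ((∑ i, fderiv ℝ u x (Pi.single i 1) * V x i)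
          + u x * (∑ i, fderiv ℝ V x (Pi.single i 1) i))) 0 := by
  refine (hasDerivAt_setIntegral_image_add_smul volume hu hu_supp hV hVbd hDVbd
    hΩo.measurableSet hΩb.measure_lt_top.ne).congr_deriv
    (setIntegral_congr_fun hΩo.measurableSet fun x _ => ?_)
  have hgrad := (fderiv ℝ u x : (Fin d → ℝ) →ₗ[ℝ] ℝ).apply_eq_sum_apply_single_mul (V x)
  rw [ContinuousLinearMap.coe_coe] at hgrad
  rw [hgrad, LinearMap.trace_eq_sum_apply_single, smul_eq_mul, mul_comm (∑ i, _)]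
  simp only [ContinuousLinearMap.coe_coe]
end

section
/- Let V : ℝ^d → ℝ^d be C¹ with bounded derivative and let x ∈ ℝ^d. Denote by P_s^{-1} the inverse of P_s = id + s•V for small s. Then s ↦ P_s^{-1}(y) is differentiable at s = 0 for each y, with derivative -V(y). -/
/-!
Write `q s = P_s⁻¹ y`, so that `q s + s • V (q s) = y`. For `s ≠ 0` this makes the difference
quotient `(q s - q 0) / s` equal to `-V (q s)`. Since `V` is Lipschitz (mean value inequality),
`‖q s - y‖ = |s| ‖V (q s)‖ ≤ |s| (‖V y‖ + K ‖q s - y‖)`, so `q s → y`, and by continuity of `V`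
the difference quotient tends to `-V y`.
-/

open Filter Topology
open scoped NNReal

section
variable {E : Type*} [NormedAddCommGroup E] [NormedSpace ℝ E] {V : E → E} {K : ℝ≥0}

theorem LipschitzWith.norm_sub_le_of_add_smul_eq (hV : LipschitzWith K V) {q y : E} {s : ℝ}
    (hq : q + s • V q = y) (hs : |s| * K ≤ 1 / 2) : ‖q - y‖ ≤ 2 * |s| * ‖V y‖ := by
  have hqy : ‖q - y‖ = |s| * ‖V q‖ := by
    rw [← hq, sub_add_cancel_left, norm_neg, norm_smul, Real.norm_eq_abs]
  have hVq : ‖V q‖ ≤ ‖V y‖ + K * ‖q - y‖ :=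
    calc ‖V q‖ ≤ ‖V y‖ + ‖V q - V y‖ := norm_le_insert' _ _
      _ ≤ ‖V y‖ + K * ‖q - y‖ := by gcongr; exact hV.norm_sub_le q y
  nlinarith [abs_nonneg s, norm_nonneg (q - y), mul_le_mul_of_nonneg_left hVq (abs_nonneg s)]

theorem LipschitzWith.tendsto_of_eventually_add_smul_eq (hV : LipschitzWith K V) {q : ℝ → E}
    {y : E} (hq : ∀ᶠ s in 𝓝 0, q s + s • V (q s) = y) : Tendsto q (𝓝 0) (𝓝 y) := by
  have hsmall : ∀ᶠ s : ℝ in 𝓝 0, |s| * K < 1 / 2 :=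
    (continuous_abs.mul continuous_const).continuousAt.eventually_lt continuousAt_const
      (by simp)
  have hbound : Tendsto (fun s : ℝ ↦ 2 * |s| * ‖V y‖) (𝓝 0) (𝓝 0) := by
    simpa using ((continuous_abs.const_mul 2).mul_const ‖V y‖).tendsto (0 : ℝ)
  refine tendsto_iff_norm_sub_tendsto_zero.2 <| squeeze_zero_norm' ?_ hbound
  filter_upwards [hq, hsmall] with s hqs hs
  simpa using hV.norm_sub_le_of_add_smul_eq hqs hs.le

theorem LipschitzWith.hasDerivAt_of_eventually_add_smul_eq (hV : LipschitzWith K V) {q : ℝ → E}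
    {y : E} (hq : ∀ᶠ s in 𝓝 0, q s + s • V (q s) = y) : HasDerivAt q (-V y) 0 := by
  have hq0 : q 0 = y := by simpa using hq.self_of_nhds
  rw [hasDerivAt_iff_tendsto_slope]
  have hlim : Tendsto (fun s ↦ -V (q s)) (𝓝[≠] 0) (𝓝 (-V y)) :=
    ((hV.continuous.tendsto y).comp (hV.tendsto_of_eventually_add_smul_eq hq)).neg.mono_left
      nhdsWithin_le_nhds
  refine hlim.congr' ?_
  filter_upwards [self_mem_nhdsWithin, nhdsWithin_le_nhds hq] with s hs hqs
  rw [slope_def_module, sub_zero, hq0, ← hqs, sub_add_cancel_left, smul_neg, smul_smul,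
    inv_mul_cancel₀ hs, one_smul]

end

theorem inverse_map_deriv
    (d : ℕ) (V : (Fin d → ℝ) → (Fin d → ℝ)) (hV : ContDiff ℝ 1 V)
    (C : ℝ) (hC : ∀ x, ‖fderiv ℝ V x‖ ≤ C)
    (Q : ℝ → (Fin d → ℝ) → (Fin d → ℝ))
    (hQ : ∀ᶠ s in nhds (0 : ℝ),
      Function.LeftInverse (Q s) (fun x => x + s • V x) ∧
      Function.RightInverse (Q s) (fun x => x + s • V x)) :
    ∀ y : Fin d → ℝ, HasDerivAt (fun s => Q s y) (-V y) 0 := by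
  intro y
  have hlip : LipschitzWith C.toNNReal V :=
    lipschitzWith_of_nnnorm_fderiv_le (hV.differentiable one_ne_zero) fun x ↦ by
      simpa using Real.toNNReal_le_toNNReal (hC x)
  exact hlip.hasDerivAt_of_eventually_add_smul_eq <| hQ.mono fun s hs ↦ hs.2 y
end
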